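/- arXiv:1802.06966 — 2 statements merged into one kernel-verified Lean document; each statement's English description precedes it below -/
import Mathlib

section
/- Abel's identity: for real numbers x, y and a nonnegative integer n with x ≠ 0, Σ_{j=0}^{n} C(n,j) x (x + j)^{j-1} (y - j)^{n-j} = (x + y)^n. -/
/-!
Write `A n x y` for the left-hand side. Expanding
`(y - j) ^ (n - j) = ((x + y) - (x + j)) ^ (n - j)` by the binomial theorem and exchanging
the two sums gives `A n x y = ∑ k, C(n, k) (x + y) ^ k A (n - k) x (-x)`.
For `m ≠ 0`, `A m x (-x) = x ∑ j, (-1) ^ (m - j) C(m, j) (x + j) ^ (m - 1)` is `x` times the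
`m`-th forward difference of a polynomial of degree `m - 1`, hence vanishes;
and `A 0 x (-x) = x x⁻¹ = 1`.
-/

open Finset

theorem Nat.choose_mul_choose_sub_comm (n j k : ℕ) :
    n.choose j * (n - j).choose k = n.choose k * (n - k).choose j := by
  have hj := Nat.choose_mul (n := n) (Nat.le_add_right j k)
  have hk := Nat.choose_mul (n := n) (Nat.le_add_left k j)
  rw [Nat.add_sub_cancel_left] at hj
  rw [Nat.add_sub_cancel] at hk
  rw [← hj, ← hk, Nat.choose_symm_add]

theorem sum_range_neg_one_pow_mul_choose_mul_pow_eq_zero {R : Type*} [CommRing R] {d m : ℕ}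
    (h : d < m) (c : R) :
    ∑ j ∈ range (m + 1), (-1) ^ (m - j) * (m.choose j : R) * (c + j) ^ d = 0 := by
  have := congr_fun (fwdDiff_iter_pow_eq_zero_of_lt (R := R) h) c
  rw [fwdDiff_iter_eq_sum_shift] at this
  simpa [zsmul_eq_mul] using this

theorem zpow_sub_one_mul_pow {G₀ : Type*} [GroupWithZero G₀] {a : G₀} {j m : ℕ}
    (ha : a ≠ 0 ∨ j ≠ 0) (hjm : j ≤ m) (hm : m ≠ 0) :
    a ^ ((j : ℤ) - 1) * a ^ (m - j) = a ^ (m - 1) := by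
  cases j with
  | zero =>
    have ha : a ≠ 0 := by simpa using ha
    obtain ⟨l, rfl⟩ := Nat.exists_eq_succ_of_ne_zero hm
    rw [Nat.cast_zero, zero_sub, zpow_neg_one, Nat.sub_zero, pow_succ', inv_mul_cancel_left₀ ha,
      Nat.succ_sub_one]
  | succ i =>
    rw [Nat.cast_succ, add_sub_cancel_right, zpow_natCast, ← pow_add]
    congr 1
    omega

section Abel

variable {K : Type*} [Field K]

def abelSum (n : ℕ) (x y : K) : K :=
  ∑ j ∈ range (n + 1), (n.choose j : K) * x * (x + j) ^ ((j : ℤ) - 1) * (y - j) ^ (n - j)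

theorem abelSum_eq_sum_choose_mul_abelSum_neg_self (n : ℕ) (x y : K) :
    abelSum n x y =
      ∑ k ∈ range (n + 1), (n.choose k : K) * (x + y) ^ k * abelSum (n - k) x (-x) := by
  calc abelSum n x y
      = ∑ j ∈ range (n + 1), ∑ k ∈ range (n - j + 1),
          (n.choose j : K) * x * (x + j) ^ ((j : ℤ) - 1) *
            ((x + y) ^ k * (-x - j) ^ (n - j - k) * ((n - j).choose k : K)) := by
        refine sum_congr rfl fun j _ => ?_
        rw [show y - j = (x + y) + (-x - j) by ring, add_pow, mul_sum]
    _ = ∑ k ∈ range (n + 1), ∑ j ∈ range (n - k + 1),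
          (n.choose j : K) * x * (x + j) ^ ((j : ℤ) - 1) *
            ((x + y) ^ k * (-x - j) ^ (n - j - k) * ((n - j).choose k : K)) :=
        sum_comm' fun j k => by simp only [mem_range]; omega
    _ = _ := by
        refine sum_congr rfl fun k _ => ?_
        rw [abelSum, mul_sum]
        refine sum_congr rfl fun j _ => ?_
        have hchoose :
            (n.choose j : K) * ((n - j).choose k : K) = n.choose k * (n - k).choose j := by
          rw [← Nat.cast_mul, ← Nat.cast_mul, Nat.choose_mul_choose_sub_comm]
        rw [Nat.sub_right_comm]
        linear_combination
          x * (x + j) ^ ((j : ℤ) - 1) * (x + y) ^ k * (-x - j) ^ (n - k - j) * hchoose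

theorem abelSum_neg_self {x : K} (hx : x ≠ 0) (m : ℕ) :
    abelSum m x (-x) = if m = 0 then 1 else 0 := by
  rcases eq_or_ne m 0 with rfl | hm
  · simp [abelSum, hx]
  rw [if_neg hm]
  calc abelSum m x (-x)
      = x * ∑ j ∈ range (m + 1), (-1) ^ (m - j) * (m.choose j : K) * (x + j) ^ (m - 1) := by
        rw [abelSum, mul_sum]
        refine sum_congr rfl fun j hj => ?_
        have hjm : j ≤ m := Nat.lt_succ_iff.1 (mem_range.1 hj)
        have hbase : x + j ≠ 0 ∨ j ≠ 0 := by
          rcases eq_or_ne j 0 with rfl | hj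
          · simpa using hx
          · exact Or.inr hj
        rw [show -x - j = -1 * (x + j) by ring, mul_pow,
          ← zpow_sub_one_mul_pow hbase hjm hm]
        ring
    _ = 0 := by rw [sum_range_neg_one_pow_mul_choose_mul_pow_eq_zero (by omega), mul_zero]

theorem abelSum_eq_add_pow (n : ℕ) {x : K} (hx : x ≠ 0) (y : K) :
    abelSum n x y = (x + y) ^ n := by
  rw [abelSum_eq_sum_choose_mul_abelSum_neg_self, sum_range_succ, Nat.sub_self,
    abelSum_neg_self hx, if_pos rfl, sum_eq_zero fun k hk => ?_]
  · simp
  · rw [abelSum_neg_self hx, if_neg (by rw [mem_range] at hk; omega), mul_zero]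

end Abel

/-- Abel's identity: for real `x ≠ 0`, `y` and `n : ℕ`,
`Σ_{j=0}^{n} C(n,j) x (x + j)^{j-1} (y - j)^{n-j} = (x + y)^n`. -/
theorem abel_identity (n : ℕ) (x y : ℝ) (hx : x ≠ 0) :
    ∑ j ∈ Finset.range (n + 1),
      (n.choose j : ℝ) * x * (x + (j : ℝ)) ^ ((j : ℤ) - 1) * (y - (j : ℝ)) ^ (n - j)
    = (x + y) ^ n :=
  abelSum_eq_add_pow n hx y
end

section
/- For fixed k ∈ ℤ⁺ and 0 ≤ j < k, the term A_{n−j}(n, k/n) = C(n,j)·((n−j+k)/n)^{n−j−1}·((j−k)/n)^{j} converges, as n → ∞, to (−1)^j (k−j)^j e^{k−j} / j!. -/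
open Filter

private lemma choose_div_pow_tendsto (j : ℕ) :
    Tendsto (fun n : ℕ => (n.choose j : ℝ) / n ^ j) atTop (nhds (1 / Nat.factorial j)) := by
  have hprod : Tendsto (fun n : ℕ => (∏ i ∈ Finset.range j, (1 - (i : ℝ) / n)) / Nat.factorial j)
      atTop (nhds (1 / Nat.factorial j)) := by
    apply Tendsto.div_const
    have : Tendsto (fun n : ℕ => ∏ i ∈ Finset.range j, (1 - (i : ℝ) / n)) atTop
        (nhds (∏ i ∈ Finset.range j, (1 : ℝ))) := by
      apply tendsto_finset_prod
      intro i _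
      have : Tendsto (fun n : ℕ => (i : ℝ) / n) atTop (nhds 0) :=
        tendsto_const_div_atTop_nhds_zero_nat _
      simpa using (tendsto_const_nhds (x := (1:ℝ))).sub this
    simpa using this
  apply hprod.congr'
  filter_upwards [eventually_ge_atTop j, eventually_ge_atTop 1] with n hn h1
  have hn0 : (n : ℝ) ≠ 0 := by positivity
  have key : (n.choose j : ℝ) * Nat.factorial j = ∏ i ∈ Finset.range j, ((n : ℝ) - i) := by
    have h1 : (n.descFactorial j : ℝ) = (Nat.factorial j : ℝ) * n.choose j := by
      exact_mod_cast congrArg (Nat.cast : ℕ → ℝ) (Nat.descFactorial_eq_factorial_mul_choose n j)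
    have h2 : (n.descFactorial j : ℝ) = ∏ i ∈ Finset.range j, ((n : ℝ) - i) := by
      rw [Nat.descFactorial_eq_prod_range, Nat.cast_prod]
      refine Finset.prod_congr rfl fun i hi => ?_
      have : i ≤ n := le_trans (le_of_lt (Finset.mem_range.mp hi)) hn
      push_cast [Nat.cast_sub this]
      ring
    rw [mul_comm, ← h1, h2]
  have hfact : (Nat.factorial j : ℝ) ≠ 0 := by positivity
  have hpow : ((n : ℝ)) ^ j = ∏ _i ∈ Finset.range j, (n : ℝ) := by
    simp
  rw [eq_comm, div_eq_div_iff (pow_ne_zero j hn0) hfact, key, hpow, ← Finset.prod_mul_distrib]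
  refine Finset.prod_congr rfl fun i _ => ?_
  field_simp

private lemma one_add_div_pow_tendsto (t : ℝ) (m : ℕ) :
    Tendsto (fun n : ℕ => (1 + t / n) ^ (n - m)) atTop (nhds (Real.exp t)) := by
  have hnum := Real.tendsto_one_add_div_pow_exp t
  have hbase : Tendsto (fun n : ℕ => (1 + t / n)) atTop (nhds 1) := by
    have : Tendsto (fun n : ℕ => t / n) atTop (nhds 0) :=
      tendsto_const_div_atTop_nhds_zero_nat _
    simpa using (tendsto_const_nhds (x := (1:ℝ))).add this
  have hden : Tendsto (fun n : ℕ => (1 + t / n) ^ m) atTop (nhds 1) := by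
    simpa using hbase.pow m
  have hdiv : Tendsto (fun n : ℕ => (1 + t / n) ^ n / (1 + t / n) ^ m) atTop
      (nhds (Real.exp t)) := by
    simpa [Pi.div_def] using hnum.div hden one_ne_zero
  apply hdiv.congr'
  filter_upwards [eventually_ge_atTop m, eventually_ge_atTop (max 1 (Nat.ceil (|t|) + 1))]
    with n hn h1
  have hn1 : 1 ≤ n := le_trans (le_max_left _ _) h1
  have habs : |t| < (n : ℝ) := by
    have : (Nat.ceil (|t|) + 1 : ℕ) ≤ n := le_trans (le_max_right _ _) h1
    calc |t| ≤ Nat.ceil (|t|) := Nat.le_ceil _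
      _ < (n : ℝ) := by exact_mod_cast lt_of_lt_of_le (Nat.lt_succ_self _) this
  have hpos : (0:ℝ) < 1 + t / n := by
    have hn0 : (0:ℝ) < n := by exact_mod_cast hn1
    have : -1 < t / n := by
      rw [lt_div_iff₀ hn0]
      nlinarith [neg_abs_le t]
    linarith
  rw [eq_comm, pow_sub₀ _ (ne_of_gt hpos) hn]
  ring

/-- For fixed `k > 0` and `0 ≤ j < k`, the term
`A_{n−j}(n, k/n) = C(n,j)·((n−j+k)/n)^{n−j−1}·((j−k)/n)^j` converges, as `n → ∞`,
to `(−1)^j (k−j)^j e^{k−j} / j!`. -/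
theorem smirnov_term_limit (k j : ℕ) (hk : 0 < k) (hjk : j < k) :
    Tendsto (fun n : ℕ =>
        (n.choose j : ℝ) * (((n : ℝ) - j + k) / n) ^ (n - j - 1) * (((j : ℝ) - k) / n) ^ j)
      atTop
      (nhds ((-1) ^ j * ((k : ℝ) - j) ^ j * Real.exp ((k : ℝ) - j) / (Nat.factorial j))) := by
  set t : ℝ := (k : ℝ) - j with ht
  have h1 := choose_div_pow_tendsto j
  have h2 := one_add_div_pow_tendsto t (j + 1)
  have hmain : Tendsto (fun n : ℕ =>
      ((n.choose j : ℝ) / n ^ j) * (1 + t / n) ^ (n - (j + 1)) * ((j : ℝ) - k) ^ j) atTop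
      (nhds (1 / Nat.factorial j * Real.exp t * ((j : ℝ) - k) ^ j)) :=
    (h1.mul h2).mul_const _
  have heq : ((j : ℝ) - k) ^ j = (-1) ^ j * ((k : ℝ) - j) ^ j := by
    rw [← neg_pow]; ring_nf
  have : (1 / Nat.factorial j * Real.exp t * ((j : ℝ) - k) ^ j)
      = (-1) ^ j * ((k : ℝ) - j) ^ j * Real.exp ((k : ℝ) - j) / (Nat.factorial j) := by
    rw [heq, ht]; ring
  rw [← this]
  apply hmain.congr'
  filter_upwards [eventually_ge_atTop 1] with n hn
  have hn0 : (n : ℝ) ≠ 0 := by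
    have : (0:ℝ) < n := by exact_mod_cast hn
    linarith
  have hb : ((n : ℝ) - j + k) / n = 1 + t / n := by
    field_simp [ht]; ring
  rw [hb]
  have hj : (((j : ℝ) - k) / n) ^ j = ((j : ℝ) - k) ^ j / n ^ j := by
    rw [div_pow]
  rw [hj]
  have : n - j - 1 = n - (j + 1) := by omega
  rw [this]
  ring
end
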